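/- arXiv:2510.23288 — 2 statements merged into one kernel-verified Lean document; each statement's English description precedes it below -/
import Mathlib

section
/- Let X = (V, E) be a finite graph, G a group, ψ an edge potential on X, ρ_in : G → GL(F_in) and ρ_out : G → GL(F_out) linear representations, and K : F_in → F_out a linear map intertwining them, i.e., K(ρ_in(g) w) = ρ_out(g) K(w) for all g ∈ G and w ∈ F_in. Fix edge weights w_{uv} > 0 for each edge and define the torsor convolution Φ : (V → F_in) → (V → F_out) by (Φ f)(v) = (1/c_v) Σ_{u ∼ v} w_{uv} K( ρ_in(ψ_{uv})⁻¹ f(u) ) when c_v := Σ_{u ∼ v} w_{uv} > 0, and (Φ f)(v) = K(f(v)) when v is isolated. Then Φ is gauge-equivariant: for any gauge transformation γ : V → G, writing ψ'_{uv} = γ_u⁻¹ ψ_{uv} γ_v, f'(v) = ρ_in(γ_v)⁻¹ f(v), and Φ' for the convolution built from ψ', one has (Φ' f')(v) = ρ_out(γ_v)⁻¹ (Φ f)(v) for every vertex v. -/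
/-!
Under a gauge change the factor `γ u` of `ψ' u v` cancels the one of `f' u`, and the
intertwiner `K` carries the remaining `(ρin (γ v))⁻¹` to `(ρout (γ v))⁻¹`. So each message
`K ((ρin (ψ' u v))⁻¹ (f' u))` is the old one with `(ρout (γ v))⁻¹` applied, and the layer,
a fixed linear combination of its messages, transforms the same way.
-/

/-- The torsor convolution layer: at a vertex `v` with positive total neighbor weight
`c v = Σ_{u ∼ v} w u v`, it outputs `(1/c v) Σ_{u ∼ v} (w u v) • K ((ρin (ψ u v))⁻¹ (f u))`;
at an isolated vertex it outputs `K (f v)`. -/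
noncomputable def torsorConv {V : Type*} [Fintype V] [DecidableEq V]
    (X : SimpleGraph V) [DecidableRel X.Adj] {G : Type*} [Group G]
    {Fi Fo : Type*} [AddCommGroup Fi] [Module ℝ Fi] [AddCommGroup Fo] [Module ℝ Fo]
    (ψ : V → V → G) (w : V → V → ℝ)
    (ρin : G →* (Fi ≃ₗ[ℝ] Fi)) (K : Fi →ₗ[ℝ] Fo) (f : V → Fi) (v : V) : Fo :=
  if 0 < ∑ u ∈ X.neighborFinset v, w u v then
    (∑ u ∈ X.neighborFinset v, w u v)⁻¹ •
      ∑ u ∈ X.neighborFinset v, w u v • K ((ρin (ψ u v))⁻¹ (f u))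
  else K (f v)

theorem MonoidHom.inv_apply_gauge {R M G : Type*} [Semiring R] [AddCommMonoid M] [Module R M]
    [Group G] (ρ : G →* (M ≃ₗ[R] M)) (a g b : G) (x : M) :
    (ρ (a⁻¹ * g * b))⁻¹ ((ρ a)⁻¹ x) = (ρ b)⁻¹ ((ρ g)⁻¹ x) := by
  simp only [← map_inv, ← LinearEquiv.mul_apply, ← map_mul, mul_inv_rev, inv_inv,
    mul_assoc, mul_inv_cancel, mul_one]

theorem LinearMap.apply_inv_apply_of_intertwines {R G M N : Type*} [Semiring R]
    [AddCommMonoid M] [Module R M] [AddCommMonoid N] [Module R N] [Group G]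
    {ρ : G →* (M ≃ₗ[R] M)} {σ : G →* (N ≃ₗ[R] N)} {K : M →ₗ[R] N}
    (hK : ∀ g x, K (ρ g x) = σ g (K x)) (g : G) (x : M) :
    K ((ρ g)⁻¹ x) = (σ g)⁻¹ (K x) := by
  rw [← map_inv, hK, map_inv]

theorem torsorConv_eq_map_of_messages {V : Type*} [Fintype V] [DecidableEq V]
    (X : SimpleGraph V) [DecidableRel X.Adj] {G : Type*} [Group G]
    {Fi Fo : Type*} [AddCommGroup Fi] [Module ℝ Fi] [AddCommGroup Fo] [Module ℝ Fo]
    (w : V → V → ℝ) (ρin : G →* (Fi ≃ₗ[ℝ] Fi)) (K : Fi →ₗ[ℝ] Fo)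
    {E : Type*} [FunLike E Fo Fo] [LinearMapClass E ℝ Fo Fo]
    (L : E) (ψ ψ' : V → V → G) (f f' : V → Fi) (v : V)
    (hmsg : ∀ u, K ((ρin (ψ' u v))⁻¹ (f' u)) = L (K ((ρin (ψ u v))⁻¹ (f u))))
    (hself : K (f' v) = L (K (f v))) :
    torsorConv X ψ' w ρin K f' v = L (torsorConv X ψ w ρin K f v) := by
  unfold torsorConv
  split_ifs
  · simp only [hmsg, map_smul, map_sum]
  · exact hself

theorem torsorConv_gauge_equivariant_general
    {V : Type*} [Fintype V] [DecidableEq V]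
    (X : SimpleGraph V) [DecidableRel X.Adj]
    {G : Type*} [Group G]
    {Fi Fo : Type*} [AddCommGroup Fi] [Module ℝ Fi] [AddCommGroup Fo] [Module ℝ Fo]
    (ψ : V → V → G)
    (ρin : G →* (Fi ≃ₗ[ℝ] Fi)) (ρout : G →* (Fo ≃ₗ[ℝ] Fo))
    (K : Fi →ₗ[ℝ] Fo) (hK : ∀ (g : G) (x : Fi), K (ρin g x) = ρout g (K x))
    (w : V → V → ℝ)
    (γ : V → G) (ψ' : V → V → G)
    (hψ' : ∀ u v : V, ψ' u v = (γ u)⁻¹ * ψ u v * γ v)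
    (f f' : V → Fi) (hf' : ∀ v : V, f' v = (ρin (γ v))⁻¹ (f v)) :
    ∀ v : V, torsorConv X ψ' w ρin K f' v =
      (ρout (γ v))⁻¹ (torsorConv X ψ w ρin K f v) := by
  intro v
  refine torsorConv_eq_map_of_messages X w ρin K (ρout (γ v))⁻¹ ψ ψ' f f' v (fun u ↦ ?_) ?_
  · rw [hψ', hf', ρin.inv_apply_gauge, LinearMap.apply_inv_apply_of_intertwines hK,
      LinearMap.apply_inv_apply_of_intertwines hK]
  · rw [hf', LinearMap.apply_inv_apply_of_intertwines hK]

/-- The torsor convolution layer is gauge-equivariant: for any gauge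
transformation `γ : V → G`, with `ψ' u v = γ u⁻¹ * ψ u v * γ v` and
`f' v = (ρin (γ v))⁻¹ (f v)`, the convolution `Φ'` built from `ψ'` satisfies
`(Φ' f') v = (ρout (γ v))⁻¹ ((Φ f) v)` at every vertex `v`. -/
theorem torsorConv_gauge_equivariant
    {V : Type*} [Fintype V] [DecidableEq V]
    (X : SimpleGraph V) [DecidableRel X.Adj]
    {G : Type*} [Group G]
    {Fi Fo : Type*} [AddCommGroup Fi] [Module ℝ Fi] [AddCommGroup Fo] [Module ℝ Fo]
    (ψ : V → V → G) (hψ : ∀ u v : V, X.Adj u v → ψ u v = (ψ v u)⁻¹)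
    (ρin : G →* (Fi ≃ₗ[ℝ] Fi)) (ρout : G →* (Fo ≃ₗ[ℝ] Fo))
    (K : Fi →ₗ[ℝ] Fo) (hK : ∀ (g : G) (x : Fi), K (ρin g x) = ρout g (K x))
    (w : V → V → ℝ) (hwpos : ∀ u v : V, X.Adj u v → 0 < w u v)
    (hwsymm : ∀ u v : V, w u v = w v u)
    (γ : V → G) (ψ' : V → V → G)
    (hψ' : ∀ u v : V, ψ' u v = (γ u)⁻¹ * ψ u v * γ v)
    (f f' : V → Fi) (hf' : ∀ v : V, f' v = (ρin (γ v))⁻¹ (f v)) :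
    ∀ v : V, torsorConv X ψ' w ρin K f' v =
      (ρout (γ v))⁻¹ (torsorConv X ψ w ρin K f v) :=
  torsorConv_gauge_equivariant_general X ψ ρin ρout K hK w γ ψ' hψ' f f' hf'
end

section
/- Let X = (V, E) be a finite graph, G a group, ψ an edge potential on X, ρ_in : G → GL(F_in) and ρ_out : G → GL(F_out) linear representations, K : F_in → F_out an intertwiner, and Φ the torsor convolution built from symmetric positive edge weights w_{uv}. If f : V → F_in satisfies the synchronization condition f(u) = ρ_in(ψ_{uv}) f(v) for every edge (u,v), then (Φ f)(v) = K(f(v)) for every vertex v, and Φ f satisfies the synchronization condition for ρ_out, i.e., (Φ f)(u) = ρ_out(ψ_{uv}) (Φ f)(v) for every edge (u,v). -/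
/-!
A synchronized assignment is the same vector `f v` after transport along any edge into `v`:
`ρin(ψ_{uv})⁻¹ f(u) = f(v)`. The convolution at `v` is therefore a weighted average of the
constant `K (f v)`, hence equal to it, and `K` intertwines `ρin` with `ρout`, which carries the
synchronization of `f` over to `K ∘ f`.
-/

section TorsorConv

variable {V : Type*} [Fintype V] [DecidableEq V] {X : SimpleGraph V} [DecidableRel X.Adj]
  {G : Type*} [Group G] {Fi Fo : Type*} [AddCommGroup Fi] [Module ℝ Fi] [AddCommGroup Fo]
  [Module ℝ Fo] {ψ : V → V → G} {w : V → V → ℝ} {ρin : G →* (Fi ≃ₗ[ℝ] Fi)} {K : Fi →ₗ[ℝ] Fo}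
  {f : V → Fi} {v : V}

theorem torsorConv_eq_centerMass (hv : 0 < ∑ u ∈ X.neighborFinset v, w u v) :
    torsorConv X ψ w ρin K f v =
      (X.neighborFinset v).centerMass (fun u ↦ w u v) (fun u ↦ K ((ρin (ψ u v))⁻¹ (f u))) :=
  if_pos hv

theorem torsorConv_eq_of_synchronized_at (hf : ∀ u, X.Adj u v → f u = ρin (ψ u v) (f v)) :
    torsorConv X ψ w ρin K f v = K (f v) := by
  by_cases hv : 0 < ∑ u ∈ X.neighborFinset v, w u v
  · have htransport : ∀ u ∈ X.neighborFinset v, w u v ≠ 0 →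
        K ((ρin (ψ u v))⁻¹ (f u)) = K (f v) := fun u hu _ ↦ by
      rw [hf u ((X.mem_neighborFinset v u).mp hu).symm]
      exact congrArg K ((ρin (ψ u v)).symm_apply_apply (f v))
    rw [torsorConv_eq_centerMass hv, Finset.centerMass_congr_fun htransport]
    exact Finset.centerMass_const hv.ne' _
  · exact if_neg hv

end TorsorConv

theorem torsorConv_preserves_sections_general
    {V : Type*} [Fintype V] [DecidableEq V]
    (X : SimpleGraph V) [DecidableRel X.Adj]
    {G : Type*} [Group G]
    {Fi Fo : Type*} [AddCommGroup Fi] [Module ℝ Fi] [AddCommGroup Fo] [Module ℝ Fo]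
    (ψ : V → V → G)
    (ρin : G →* (Fi ≃ₗ[ℝ] Fi)) (ρout : G →* (Fo ≃ₗ[ℝ] Fo))
    (K : Fi →ₗ[ℝ] Fo) (hK : ∀ (g : G) (x : Fi), K (ρin g x) = ρout g (K x))
    (w : V → V → ℝ)
    (f : V → Fi) (hf : ∀ u v : V, X.Adj u v → f u = ρin (ψ u v) (f v)) :
    (∀ v : V, torsorConv X ψ w ρin K f v = K (f v)) ∧
      (∀ u v : V, X.Adj u v →
        torsorConv X ψ w ρin K f u = ρout (ψ u v) (torsorConv X ψ w ρin K f v)) := by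
  have hconst : ∀ v, torsorConv X ψ w ρin K f v = K (f v) := fun v ↦
    torsorConv_eq_of_synchronized_at fun u huv ↦ hf u v huv
  refine ⟨hconst, fun u v huv ↦ ?_⟩
  rw [hconst u, hconst v, hf u v huv, hK]

/-- The torsor convolution preserves synchronized assignments (global
sections): if `f` is synchronized for `ρin`, then `(Φ f) v = K (f v)` at every vertex,
and `Φ f` is synchronized for `ρout`. -/
theorem torsorConv_preserves_sections
    {V : Type*} [Fintype V] [DecidableEq V]
    (X : SimpleGraph V) [DecidableRel X.Adj]
    {G : Type*} [Group G]
    {Fi Fo : Type*} [AddCommGroup Fi] [Module ℝ Fi] [AddCommGroup Fo] [Module ℝ Fo]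
    (ψ : V → V → G) (hψ : ∀ u v : V, X.Adj u v → ψ u v = (ψ v u)⁻¹)
    (ρin : G →* (Fi ≃ₗ[ℝ] Fi)) (ρout : G →* (Fo ≃ₗ[ℝ] Fo))
    (K : Fi →ₗ[ℝ] Fo) (hK : ∀ (g : G) (x : Fi), K (ρin g x) = ρout g (K x))
    (w : V → V → ℝ) (hwpos : ∀ u v : V, X.Adj u v → 0 < w u v)
    (hwsymm : ∀ u v : V, w u v = w v u)
    (f : V → Fi) (hf : ∀ u v : V, X.Adj u v → f u = ρin (ψ u v) (f v)) :
    (∀ v : V, torsorConv X ψ w ρin K f v = K (f v)) ∧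
      (∀ u v : V, X.Adj u v →
        torsorConv X ψ w ρin K f u = ρout (ψ u v) (torsorConv X ψ w ρin K f v)) :=
  torsorConv_preserves_sections_general X ψ ρin ρout K hK w f hf
end
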